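/- Let n ≥ 1, s ∈ {1,…,n}, let μ be a measure on a metric (or topological) space X, B ⊆ X a set, and f : B → ℝⁿ any map. Let v > n, c_s = (v−n)/(sv+n), and suppose there is d > c_s, a sequence t⁽ʲ⁾ = (t₁⁽ʲ⁾,…,t_n⁽ʲ⁾) with tᵢ⁽ʲ⁾ ≥ 0 and ∑ᵢtᵢ⁽ʲ⁾ → ∞, and vectors w⁽ʲ⁾ ∈ ℤ^{n+1}_s, such that for every x ∈ B ∩ supp μ and every j, ‖g_{t⁽ʲ⁾} u_{f(x)} w⁽ʲ⁾‖ < e^{−d·∑ᵢtᵢ⁽ʲ⁾}. Then there exists u > v such that f(B ∩ supp μ) ⊆ W×_u, i.e. ω×(f(x)) ≥ u for every x ∈ B ∩ supp μ. -/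

import Mathlib

/-!
Write `T_j = ∑ᵢ tᵢ⁽ʲ⁾`. The bound on the coordinates of `g_t u_y w⁽ʲ⁾` gives
`|qᵢ⁽ʲ⁾| < e^{tᵢ - d T_j}` on the `s` nonzero coordinates, hence `s d < 1` and
`Π×(q⁽ʲ⁾) ≤ e^{(1 - s d) T_j}`, while the first coordinate gives `|q⁽ʲ⁾·y + p_j| < e^{-(1 + d) T_j}`.
So every `q⁽ʲ⁾` is a solution for the exponent `u = n (1 + d) / (1 - s d)`, and `u > v` is exactly
`d > (v - n) / (s v + n)`. Since `T_j → ∞`, either these solutions form an infinite set, or a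
single one recurs with `q·y ∈ ℤ`, and then all its integer multiples are solutions.
-/

open Filter MeasureTheory Metric Set BigOperators

/-- Π×(q) = ∏_{i : qᵢ ≠ 0} |qᵢ| (empty product = 1). -/
noncomputable def prodTimes {n : ℕ} (q : Fin n → ℤ) : ℝ :=
  ∏ i, if q i = 0 then 1 else |(q i : ℝ)|

/-- Multiplicative Diophantine exponent ω×(y): the sup (in the extended reals) of all
v ∈ ℝ such that there are infinitely many q ∈ ℤⁿ with |q·y + p| < Π×(q)^{-v/n}
for some p ∈ ℤ. -/
noncomputable def omegaT {n : ℕ} (y : Fin n → ℝ) : EReal :=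
  sSup {w : EReal | ∃ v : ℝ, w = (v : EReal) ∧
    {q : Fin n → ℤ | ∃ p : ℤ, |(∑ i, (q i : ℝ) * y i) + (p : ℝ)| <
      (prodTimes q) ^ (-(v / (n : ℝ)))}.Infinite}

/-- Support of a measure on a topological space: points all of whose neighborhoods
have positive measure. -/
def msupp {X : Type*} [TopologicalSpace X] [MeasurableSpace X] (μ : Measure X) : Set X :=
  {x | ∀ U ∈ nhds x, 0 < μ U}

namespace Real

theorem lt_exp_sub_of_exp_mul_lt {a b x : ℝ} (h : exp a * x < exp b) : x < exp (b - a) := by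
  rwa [exp_sub, lt_div_iff₀' (exp_pos a)]

theorem exp_neg_mul_le_rpow_neg {P a b T : ℝ} (hP : 0 < P) (ha : 0 < a) (hb : 0 ≤ b)
    (h : P ≤ exp (a * T)) : exp (-(b * T)) ≤ P ^ (-(b / a)) := by
  have hpow : P ^ (b / a) ≤ exp (b * T) := by
    calc P ^ (b / a) ≤ exp (a * T) ^ (b / a) := rpow_le_rpow hP.le h (by positivity)
      _ = exp (b * T) := by rw [← exp_mul]; field_simp
  rw [rpow_neg hP.le, exp_neg]
  exact inv_anti₀ (rpow_pos_of_pos hP _) hpow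

end Real

theorem exists_eq_of_tendsto_of_finite_range {ι X : Type*} [TopologicalSpace X] [T1Space X]
    {l : Filter ι} [l.NeBot] {u : ι → X} {a : X} (hu : (range u).Finite)
    (h : Tendsto u l (nhds a)) : ∃ i, u i = a := by
  have hout : ∀ᶠ i in l, u i ∉ range u \ {a} :=
    h ((hu.sdiff (t := {a})).isClosed.compl_mem_nhds fun ha => ha.2 rfl)
  obtain ⟨i, hi⟩ := hout.exists
  exact ⟨i, by_contra fun hne => hi ⟨mem_range_self i, hne⟩⟩

theorem lt_mul_one_add_div_one_sub {n s v d : ℝ} (hn : 0 < n) (hs : 0 ≤ s) (hv : n < v)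
    (hd : (v - n) / (s * v + n) < d) (hsd : s * d < 1) :
    v < n * (1 + d) / (1 - s * d) := by
  have hd' := (div_lt_iff₀ (by nlinarith)).1 hd
  rw [lt_div_iff₀ (by linarith)]
  linarith

section prodTimes

variable {n : ℕ}

theorem prodTimes_eq_prod_filter (q : Fin n → ℤ) :
    prodTimes q = ∏ i ∈ Finset.univ.filter (fun i => q i ≠ 0), |(q i : ℝ)| := by
  rw [Finset.prod_filter, prodTimes]
  exact Finset.prod_congr rfl fun i _ => by split_ifs <;> simp_all

theorem one_le_prodTimes (q : Fin n → ℤ) : 1 ≤ prodTimes q := by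
  rw [prodTimes_eq_prod_filter]
  refine Finset.one_le_prod fun i hi => ?_
  rw [← Int.cast_abs]
  exact_mod_cast Int.one_le_abs (Finset.mem_filter.1 hi).2

theorem prodTimes_pos (q : Fin n → ℤ) : 0 < prodTimes q :=
  one_pos.trans_le (one_le_prodTimes q)

theorem prodTimes_le_exp_sum {q : Fin n → ℤ} {a : Fin n → ℝ}
    (h : ∀ i, q i ≠ 0 → |(q i : ℝ)| ≤ Real.exp (a i)) :
    prodTimes q ≤ Real.exp (∑ i ∈ Finset.univ.filter (fun i => q i ≠ 0), a i) := by
  rw [prodTimes_eq_prod_filter, Real.exp_sum]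
  exact Finset.prod_le_prod (fun i _ => abs_nonneg _) fun i hi => h i (Finset.mem_filter.1 hi).2

end prodTimes

def approxSet {n : ℕ} (y : Fin n → ℝ) (v : ℝ) : Set (Fin n → ℤ) :=
  {q | ∃ p : ℤ, |(∑ i, (q i : ℝ) * y i) + (p : ℝ)| < (prodTimes q) ^ (-(v / (n : ℝ)))}

section approxSet

variable {n : ℕ} {y : Fin n → ℝ}

theorem le_omegaT_of_infinite {v : ℝ} (h : (approxSet y v).Infinite) :
    (v : EReal) ≤ omegaT y :=
  le_sSup ⟨v, rfl, h⟩

theorem approxSet_infinite_of_eq_zero {v : ℝ} {q : Fin n → ℤ} {p : ℤ} (hq : q ≠ 0)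
    (h : (∑ i, (q i : ℝ) * y i) + p = 0) : (approxSet y v).Infinite := by
  refine Set.infinite_of_injective_forall_mem (smul_left_injective ℤ hq) fun c => ⟨c * p, ?_⟩
  have hzero : (∑ i, ((c • q) i : ℝ) * y i) + ((c * p : ℤ) : ℝ) = 0 := by
    simp only [Pi.smul_apply, smul_eq_mul, Int.cast_mul, mul_assoc, ← Finset.mul_sum, ← mul_add,
      h, mul_zero]
  rw [hzero, abs_zero]
  exact Real.rpow_pos_of_pos (prodTimes_pos _) _

/-- Finitely many solutions cannot approximate better and better unless one of them is exact,
and the multiples of an exact solution are solutions. -/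
theorem approxSet_infinite {v : ℝ} {p : ℕ → ℤ} {q : ℕ → Fin n → ℤ} (hq : ∀ j, q j ≠ 0)
    (hmem : ∀ j, q j ∈ approxSet y v)
    (hlim : Tendsto (fun j => |(∑ i, (q j i : ℝ) * y i) + p j|) atTop (nhds 0)) :
    (approxSet y v).Infinite := by
  intro hfin
  set A : (Fin n → ℤ) → ℝ := fun q => ∑ i, (q i : ℝ) * y i
  set distInt : (Fin n → ℤ) → ℝ := fun q => |A q - round (A q)|
  have hdist : Tendsto (distInt ∘ q) atTop (nhds 0) :=
    squeeze_zero (fun _ => abs_nonneg _)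
      (fun j => by simpa [distInt, A] using round_le (A (q j)) (-p j)) hlim
  have hrange : (range (distInt ∘ q)).Finite := by
    rw [Set.range_comp]
    exact (hfin.subset (range_subset_iff.2 hmem)).image distInt
  obtain ⟨j, hj⟩ := exists_eq_of_tendsto_of_finite_range hrange hdist
  have hexact : A (q j) + ((-round (A (q j)) : ℤ) : ℝ) = 0 := by
    simp only [Function.comp_apply, distInt, abs_eq_zero, sub_eq_zero] at hj
    push_cast
    linarith
  exact approxSet_infinite_of_eq_zero (hq j) hexact hfin

end approxSet

section flowBounds

variable {n : ℕ} {t : Fin n → ℝ} {q : Fin n → ℤ} {d : ℝ}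

theorem abs_lt_exp_sub_of_exp_neg_mul_abs_lt {i : Fin n}
    (h : Real.exp (-(t i)) * |(q i : ℝ)| < Real.exp (-d * ∑ i, t i)) :
    |(q i : ℝ)| < Real.exp (t i - d * ∑ i, t i) := by
  simpa [sub_eq_add_neg, add_comm, neg_mul] using Real.lt_exp_sub_of_exp_mul_lt h

theorem mul_sum_lt_of_ne_zero {i : Fin n} (hi : q i ≠ 0)
    (h : Real.exp (-(t i)) * |(q i : ℝ)| < Real.exp (-d * ∑ i, t i)) :
    d * ∑ i, t i < t i := by
  have hq : (1 : ℝ) ≤ |(q i : ℝ)| := by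
    rw [← Int.cast_abs]
    exact_mod_cast Int.one_le_abs hi
  have := hq.trans_lt (abs_lt_exp_sub_of_exp_neg_mul_abs_lt h)
  rw [Real.one_lt_exp_iff] at this
  linarith

theorem sum_filter_ne_zero_le_sum (ht : ∀ i, 0 ≤ t i) :
    ∑ i ∈ Finset.univ.filter (fun i => q i ≠ 0), t i ≤ ∑ i, t i :=
  Finset.sum_le_sum_of_subset_of_nonneg (Finset.filter_subset _ _) fun i _ _ => ht i

theorem card_mul_lt_one (ht : ∀ i, 0 ≤ t i)
    (hq : ∀ i, Real.exp (-(t i)) * |(q i : ℝ)| < Real.exp (-d * ∑ i, t i)) (hT : 0 < ∑ i, t i)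
    (hcard : (Finset.univ.filter fun i => q i ≠ 0).Nonempty) :
    ((Finset.univ.filter fun i => q i ≠ 0).card : ℝ) * d < 1 := by
  have hsum := Finset.sum_lt_sum_of_nonempty hcard
    fun i hi => mul_sum_lt_of_ne_zero (Finset.mem_filter.1 hi).2 (hq i)
  rw [Finset.sum_const, nsmul_eq_mul] at hsum
  have := hsum.trans_le (sum_filter_ne_zero_le_sum ht)
  nlinarith

theorem prodTimes_le_exp_one_sub_card_mul (ht : ∀ i, 0 ≤ t i)
    (hq : ∀ i, Real.exp (-(t i)) * |(q i : ℝ)| < Real.exp (-d * ∑ i, t i)) :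
    prodTimes q ≤
      Real.exp ((1 - (Finset.univ.filter fun i => q i ≠ 0).card * d) * ∑ i, t i) := by
  refine (prodTimes_le_exp_sum fun i _ => (abs_lt_exp_sub_of_exp_neg_mul_abs_lt (hq i)).le).trans ?_
  rw [Real.exp_le_exp, Finset.sum_sub_distrib, Finset.sum_const, nsmul_eq_mul]
  have := sum_filter_ne_zero_le_sum (q := q) ht
  nlinarith

theorem abs_lt_exp_neg_of_exp_mul_abs_lt {T x : ℝ} (h : Real.exp T * |x| < Real.exp (-d * T)) :
    |x| < Real.exp (-((1 + d) * T)) := by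
  convert Real.lt_exp_sub_of_exp_mul_lt h using 2
  ring

theorem mem_approxSet_of_lt {y : Fin n → ℝ} {p : ℤ} (hn : 0 < n) (ht : ∀ i, 0 ≤ t i)
    (hd : 0 ≤ 1 + d) (hsd : ((Finset.univ.filter fun i => q i ≠ 0).card : ℝ) * d < 1)
    (hlin : Real.exp (∑ i, t i) * |(p : ℝ) + ∑ i, (q i : ℝ) * y i| < Real.exp (-d * ∑ i, t i))
    (hq : ∀ i, Real.exp (-(t i)) * |(q i : ℝ)| < Real.exp (-d * ∑ i, t i)) :
    q ∈ approxSet y (n * (1 + d) / (1 - (Finset.univ.filter fun i => q i ≠ 0).card * d)) := by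
  refine ⟨p, ?_⟩
  have hexp : (n * (1 + d) / (1 - (Finset.univ.filter fun i => q i ≠ 0).card * d)) / n =
      (1 + d) / (1 - (Finset.univ.filter fun i => q i ≠ 0).card * d) := by
    field_simp
  rw [hexp, add_comm]
  exact (abs_lt_exp_neg_of_exp_mul_abs_lt hlin).trans_le <| Real.exp_neg_mul_le_rpow_neg
    (prodTimes_pos q) (by linarith) hd (prodTimes_le_exp_one_sub_card_mul ht hq)

end flowBounds

theorem stmt10_general {X : Type*} [MetricSpace X] [MeasurableSpace X]
    (μ : Measure X) (B : Set X) (n : ℕ) (hn : 1 ≤ n)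
    (s : ℕ) (hs1 : 1 ≤ s)
    (f : X → Fin n → ℝ) (v d : ℝ) (hv : (n : ℝ) < v)
    (hd : (v - n) / (s * v + n) < d)
    (t : ℕ → Fin n → ℝ) (ht0 : ∀ j i, 0 ≤ t j i)
    (htend : Filter.Tendsto (fun j => ∑ i, t j i) Filter.atTop Filter.atTop)
    (p : ℕ → ℤ) (q : ℕ → Fin n → ℤ)
    (hw : ∀ j, (Finset.univ.filter fun i => q j i ≠ 0).card = s)
    (hsmall : ∀ x ∈ B ∩ msupp μ, ∀ j,
      Real.exp (∑ i, t j i) * |(p j : ℝ) + ∑ i, (q j i : ℝ) * f x i| <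
        Real.exp (-d * ∑ i, t j i) ∧
      ∀ i, Real.exp (-(t j i)) * |(q j i : ℝ)| < Real.exp (-d * ∑ i, t j i)) :
    ∃ u > v, ∀ x ∈ B ∩ msupp μ, (u : EReal) ≤ omegaT (f x) := by
  rcases (B ∩ msupp μ).eq_empty_or_nonempty with hempty | ⟨x₀, hx₀⟩
  · exact ⟨v + 1, by linarith, by simp [hempty]⟩
  have hn0 : (0 : ℝ) < n := by exact_mod_cast hn
  have hd0 : 0 < d := (div_pos (by linarith) (by positivity [hn0.trans hv])).trans hd
  have hsupp : ∀ j, (Finset.univ.filter fun i => q j i ≠ 0).Nonempty := fun j => by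
    rw [← Finset.card_pos, hw j]
    exact hs1
  obtain ⟨j₀, hj₀⟩ := (htend.eventually_gt_atTop 0).exists
  have hsd : (s : ℝ) * d < 1 := by
    simpa [hw j₀] using card_mul_lt_one (ht0 j₀) (hsmall x₀ hx₀ j₀).2 hj₀ (hsupp j₀)
  refine ⟨n * (1 + d) / (1 - s * d), lt_mul_one_add_div_one_sub hn0 s.cast_nonneg hv hd hsd,
    fun x hx => le_omegaT_of_infinite (approxSet_infinite (p := p) (q := q) ?_ ?_ ?_)⟩
  · intro j hq0
    simpa [hq0] using hsupp j
  · intro j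
    simpa [hw j] using mem_approxSet_of_lt (y := f x) (by omega) (ht0 j) (by linarith)
      (by rwa [hw j]) (hsmall x hx j).1 (hsmall x hx j).2
  · refine squeeze_zero (fun _ => abs_nonneg _) (fun j => ?_) <| Real.tendsto_exp_atBot.comp <|
      tendsto_neg_atTop_atBot.comp (htend.const_mul_atTop (r := 1 + d) (by linarith))
    rw [add_comm]
    exact (abs_lt_exp_neg_of_exp_mul_abs_lt (hsmall x hx j).1).le

theorem stmt10 {X : Type*} [MetricSpace X] [MeasurableSpace X]
    (μ : Measure X) (B : Set X) (n : ℕ) (hn : 1 ≤ n)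
    (s : ℕ) (hs1 : 1 ≤ s) (hsn : s ≤ n)
    (f : X → Fin n → ℝ) (v d : ℝ) (hv : (n : ℝ) < v)
    (hd : (v - n) / (s * v + n) < d)
    (t : ℕ → Fin n → ℝ) (ht0 : ∀ j i, 0 ≤ t j i)
    (htend : Filter.Tendsto (fun j => ∑ i, t j i) Filter.atTop Filter.atTop)
    (p : ℕ → ℤ) (q : ℕ → Fin n → ℤ)
    (hw : ∀ j, (Finset.univ.filter fun i => q j i ≠ 0).card = s)
    (hsmall : ∀ x ∈ B ∩ msupp μ, ∀ j,
      Real.exp (∑ i, t j i) * |(p j : ℝ) + ∑ i, (q j i : ℝ) * f x i| <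
        Real.exp (-d * ∑ i, t j i) ∧
      ∀ i, Real.exp (-(t j i)) * |(q j i : ℝ)| < Real.exp (-d * ∑ i, t j i)) :
    ∃ u > v, ∀ x ∈ B ∩ msupp μ, (u : EReal) ≤ omegaT (f x) :=
  stmt10_general μ B n hn s hs1 f v d hv hd t ht0 htend p q hw hsmall
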